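/- Let f : {−1,1}^n → {−1,1} be a t-leaf decision tree, S ⊆ [n], and suppose E_{x∼U}[f_S(x)²] = Σ_{T ⊇ S} \hat{f}(T)² ≥ θ². Then there exists S' ⊇ S with |\hat{f}(S')| ≥ θ²/t. -/

import Mathlib

/-!
Branching on `x i` averages the Fourier coefficients at `S` and `S ∆ {i}` of the two subtrees, so
the Fourier `L¹` norm `∑_S |f̂(S)|` of a node is at most the sum of those of its children, and a
`t`-leaf tree has `L¹` norm at most `t`. If `S'` maximizes `|f̂(U)|` over `U ⊇ S`, then
`θ² ≤ ∑_{U ⊇ S} f̂(U)² ≤ |f̂(S')| · ∑_{U ⊇ S} |f̂(U)| ≤ |f̂(S')| · t`.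
-/

open Finset

/-- Binary decision trees over n Boolean variables with ±1 leaves. -/
inductive DTree (n : ℕ) : Type
  | leaf (b : Bool) : DTree n
  | node (i : Fin n) (l r : DTree n) : DTree n

namespace DTree

/-- Evaluation of a decision tree, with leaves taking values ±1. -/
def eval {n : ℕ} : DTree n → (Fin n → Bool) → ℝ
  | leaf b, _ => if b then 1 else -1
  | node i l r, x => if x i then l.eval x else r.eval x

/-- Number of leaves. -/
def leaves {n : ℕ} : DTree n → ℕ
  | leaf _ => 1
  | node _ l r => l.leaves + r.leaves

/-- Depth. -/
def depth {n : ℕ} : DTree n → ℕ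
  | leaf _ => 0
  | node _ l r => max l.depth r.depth + 1

end DTree

/-- Fourier coefficient of f : {−1,1}^n → ℝ under the uniform distribution,
with Boolean b encoding the point (b = true ↦ 1, b = false ↦ −1). -/
noncomputable def fourierU {n : ℕ} (f : (Fin n → Bool) → ℝ) (S : Finset (Fin n)) : ℝ :=
  (∑ x : Fin n → Bool, f x * ∏ i ∈ S, (if x i then (1 : ℝ) else -1)) / 2 ^ n

noncomputable section

variable {n : ℕ}

def boolSign (b : Bool) : ℝ := if b then 1 else -1

lemma boolSign_mul_self (b : Bool) : boolSign b * boolSign b = 1 := by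
  cases b <;> norm_num [boolSign]

lemma sum_boolSign : ∑ b : Bool, boolSign b = 0 := by
  norm_num [boolSign]

/-- The Walsh character `χ_S`. -/
def walsh (S : Finset (Fin n)) (x : Fin n → Bool) : ℝ := ∏ i ∈ S, boolSign (x i)

lemma walsh_eq_prod_univ (S : Finset (Fin n)) (x : Fin n → Bool) :
    walsh S x = ∏ i, if i ∈ S then boolSign (x i) else 1 :=
  (Fintype.prod_ite_mem S _).symm

lemma walsh_symmDiff (S U : Finset (Fin n)) (x : Fin n → Bool) :
    walsh (symmDiff S U) x = walsh S x * walsh U x := by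
  simp only [walsh_eq_prod_univ, ← prod_mul_distrib]
  refine prod_congr rfl fun i _ => ?_
  by_cases hS : i ∈ S <;> by_cases hU : i ∈ U <;>
    simp [mem_symmDiff, hS, hU, boolSign_mul_self]

lemma walsh_symmDiff_singleton (S : Finset (Fin n)) (i : Fin n) (x : Fin n → Bool) :
    walsh (symmDiff S {i}) x = boolSign (x i) * walsh S x := by
  rw [walsh_symmDiff, mul_comm, walsh, prod_singleton]

lemma sum_walsh_eq_zero {S : Finset (Fin n)} (hS : S.Nonempty) :
    ∑ x : Fin n → Bool, walsh S x = 0 := by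
  obtain ⟨i, hi⟩ := hS
  have h := Fintype.prod_sum (fun (j : Fin n) (b : Bool) => if j ∈ S then boolSign b else 1)
  simp only [← walsh_eq_prod_univ] at h
  rw [← h]
  exact prod_eq_zero (mem_univ i) (by simp only [hi, if_true, sum_boolSign])

lemma fourierU_eq_sum_walsh (f : (Fin n → Bool) → ℝ) (S : Finset (Fin n)) :
    fourierU f S = (∑ x, f x * walsh S x) / 2 ^ n := rfl

lemma fourierU_const (c : ℝ) (S : Finset (Fin n)) :
    fourierU (fun _ => c) S = if S = ∅ then c else 0 := by
  rw [fourierU_eq_sum_walsh, ← mul_sum]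
  split_ifs with hS
  · simp [hS, walsh]
  · simp [sum_walsh_eq_zero (nonempty_iff_ne_empty.mpr hS)]

lemma ite_eq_boolSign (b : Bool) (u v : ℝ) :
    (if b then u else v) = (u + boolSign b * u + v - boolSign b * v) / 2 := by
  cases b <;> simp only [boolSign, if_true, Bool.false_eq_true, if_false] <;> ring

/-- Branching on `x i` mixes the coefficients at `S` and `S ∆ {i}`, since
`χ_{i} χ_S = χ_{S ∆ {i}}`. -/
lemma fourierU_ite (i : Fin n) (f g : (Fin n → Bool) → ℝ) (S : Finset (Fin n)) :
    fourierU (fun x => if x i then f x else g x) S =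
      (fourierU f S + fourierU f (symmDiff S {i})
        + fourierU g S - fourierU g (symmDiff S {i})) / 2 := by
  simp only [fourierU_eq_sum_walsh, walsh_symmDiff_singleton, sum_div, ← sum_add_distrib,
    ← sum_sub_distrib]
  refine sum_congr rfl fun x _ => ?_
  rw [ite_eq_boolSign]
  ring

def fourierL1 (f : (Fin n → Bool) → ℝ) : ℝ := ∑ S, |fourierU f S|

lemma fourierL1_const (c : ℝ) : fourierL1 (n := n) (fun _ => c) = |c| := by
  simp only [fourierL1, fourierU_const, apply_ite, abs_zero, sum_ite_eq', mem_univ, if_true]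

lemma fourierL1_ite_le (i : Fin n) (f g : (Fin n → Bool) → ℝ) :
    fourierL1 (fun x => if x i then f x else g x) ≤ fourierL1 f + fourierL1 g := by
  have sum_symmDiff (h : (Fin n → Bool) → ℝ) :
      ∑ S, |fourierU h (symmDiff S {i})| = fourierL1 h :=
    (symmDiff_left_involutive ({i} : Finset (Fin n))).bijective.sum_comp (fun S => |fourierU h S|)
  calc fourierL1 (fun x => if x i then f x else g x)
      ≤ ∑ S, (|fourierU f S| + |fourierU f (symmDiff S {i})|
          + |fourierU g S| + |fourierU g (symmDiff S {i})|) / 2 := by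
        refine sum_le_sum fun S _ => ?_
        rw [fourierU_ite, abs_div, abs_two]
        gcongr
        exact (abs_sub _ _).trans (by gcongr; exact abs_add_three _ _ _)
    _ = fourierL1 f + fourierL1 g := by
        simp only [← sum_div, sum_add_distrib, sum_symmDiff]
        rw [fourierL1, fourierL1]
        ring

lemma DTree.fourierL1_eval_le_leaves (T : DTree n) : fourierL1 T.eval ≤ T.leaves := by
  induction T with
  | leaf b =>
    rw [show (DTree.leaf b).eval = fun _ => if b then (1 : ℝ) else -1 from rfl, fourierL1_const]
    cases b <;> norm_num [DTree.leaves]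
  | node i l r hl hr =>
    calc fourierL1 (DTree.node i l r).eval ≤ fourierL1 l.eval + fourierL1 r.eval :=
          fourierL1_ite_le i l.eval r.eval
      _ ≤ (DTree.node i l r).leaves := by push_cast [DTree.leaves]; gcongr

lemma exists_sum_sq_le_abs_mul_sum_abs {ι : Type*} {s : Finset ι} (hs : s.Nonempty) (a : ι → ℝ) :
    ∃ j ∈ s, ∑ i ∈ s, a i ^ 2 ≤ |a j| * ∑ i ∈ s, |a i| := by
  obtain ⟨j, hj, hmax⟩ := s.exists_max_image (fun i => |a i|) hs
  refine ⟨j, hj, ?_⟩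
  rw [mul_sum]
  refine sum_le_sum fun i hi => ?_
  rw [← sq_abs, sq]
  exact mul_le_mul_of_nonneg_right (hmax i hi) (abs_nonneg _)

end

/-- If the Fourier mass of a t-leaf decision tree above a set S
is at least θ², then some superset S' of S has a Fourier coefficient of
magnitude at least θ²/t. -/
theorem dtree_heavy_superset (n t : ℕ) (T : DTree n) (hT : T.leaves = t)
    (S : Finset (Fin n)) (θ : ℝ)
    (hmass : θ ^ 2 ≤ ∑ T' ∈ univ.filter (fun T' : Finset (Fin n) => S ⊆ T'),
      (fourierU T.eval T') ^ 2) :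
    ∃ S' : Finset (Fin n), S ⊆ S' ∧ θ ^ 2 / t ≤ |fourierU T.eval S'| := by
  set F := univ.filter (fun T' : Finset (Fin n) => S ⊆ T')
  obtain ⟨S', hS'F, hsq⟩ :=
    exists_sum_sq_le_abs_mul_sum_abs (s := F) ⟨S, by simp [F]⟩ (fourierU T.eval)
  refine ⟨S', (mem_filter.mp hS'F).2, div_le_of_le_mul₀ t.cast_nonneg (abs_nonneg _) ?_⟩
  have hL1 : ∑ U ∈ F, |fourierU T.eval U| ≤ t :=
    hT ▸ (sum_le_univ_sum_of_nonneg fun _ => abs_nonneg _).trans T.fourierL1_eval_le_leaves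
  calc θ ^ 2 ≤ ∑ U ∈ F, fourierU T.eval U ^ 2 := hmass
    _ ≤ |fourierU T.eval S'| * ∑ U ∈ F, |fourierU T.eval U| := hsq
    _ ≤ |fourierU T.eval S'| * t := by gcongr
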